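/- Let G be a compact metric group acting continuously on a compact metric space N, let Δ ⊆ N be a closed set, and let λ be a Borel probability measure on G. Suppose for every y ∈ N, λ({α ∈ G : α·y ∈ Δ}) = 0. Then for every ε > 0 there exists an open neighborhood W of Δ such that λ({α ∈ G : α·y ∈ W}) < ε for every y ∈ N. -/

import Mathlib

/-!
For `r > 0` put `f r y = λ {α | α • y ∈ cthickening r Δ}`. Since `G` is compact, the section
measures of a closed subset of `G × N` are upper semicontinuous in the parameter (tube lemma plus
outer regularity of `λ`). As `r ↓ 0`, `f r y` decreases to the null measure of the visit set of
`Δ`, so every `y` has some `r` with `f r y < ε`; upper semicontinuity makes this hold near `y`,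
and compactness of `N` gives one `r` for all `y`. Then `W = thickening r Δ` works.
-/

open MeasureTheory Metric Set Filter Topology

open scoped ENNReal

theorem IsClosed.upperSemicontinuous_measure_section {G Y : Type*} [TopologicalSpace G]
    [CompactSpace G] [MeasurableSpace G] [TopologicalSpace Y] (μ : Measure G)
    [μ.OuterRegular] {C : Set (G × Y)} (hC : IsClosed C) :
    UpperSemicontinuous fun y => μ {g | (g, y) ∈ C} := by
  intro y c hc
  obtain ⟨U, hCU, hU, hUc⟩ := Set.exists_isOpen_lt_of_lt _ c hc
  have hleave : IsClosed (Prod.snd '' (C ∩ Uᶜ ×ˢ univ)) :=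
    isClosedMap_snd_of_compactSpace _ (hC.inter (hU.isClosed_compl.prod isClosed_univ))
  have hy : y ∉ Prod.snd '' (C ∩ Uᶜ ×ˢ univ) := by
    rintro ⟨⟨g, _⟩, ⟨hgC, hgU, -⟩, rfl⟩
    exact hgU (hCU hgC)
  filter_upwards [hleave.isOpen_compl.mem_nhds hy] with y' hy'
  refine (measure_mono fun g hg => ?_).trans_lt hUc
  by_contra hgU
  exact hy' ⟨(g, y'), ⟨hg, hgU, mem_univ _⟩, rfl⟩

theorem tendsto_measure_preimage_cthickening {G X : Type*} [TopologicalSpace G]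
    [MeasurableSpace G] [OpensMeasurableSpace G] [PseudoMetricSpace X] (μ : Measure G)
    [IsFiniteMeasure μ] {h : G → X} (hh : Continuous h) {K : Set X} (hK : IsClosed K) :
    Tendsto (fun r => μ (h ⁻¹' cthickening r K)) (𝓝[>] 0) (𝓝 (μ (h ⁻¹' K))) := by
  have hK' : h ⁻¹' K = ⋂ r > (0 : ℝ), h ⁻¹' cthickening r K := by
    have hKeq := closure_eq_iInter_cthickening K
    rw [hK.closure_eq] at hKeq
    conv_lhs => rw [hKeq]
    simp only [preimage_iInter]
  rw [hK']
  exact tendsto_measure_biInter_gt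
    (fun r _ => (isClosed_cthickening.preimage hh).measurableSet.nullMeasurableSet)
    (fun r r' _ hr => preimage_mono (cthickening_mono hr K)) ⟨1, zero_lt_one, measure_ne_top μ _⟩

theorem CompactSpace.exists_pos_forall_lt_of_upperSemicontinuous {X β : Type*}
    [TopologicalSpace X] [CompactSpace X] [Preorder β] {f : ℝ → X → β}
    (hf : ∀ r, UpperSemicontinuous (f r)) (hmono : Monotone f) {c : β}
    (hc : ∀ x, ∃ r > 0, f r x < c) : ∃ r > 0, ∀ x, f r x < c := by
  have : Nonempty (Ioi (0 : ℝ)) := ⟨⟨1, mem_Ioi.2 one_pos⟩⟩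
  obtain ⟨⟨r, hr⟩, hcover⟩ := isCompact_univ.elim_directed_cover
    (fun r : Ioi (0 : ℝ) => f r ⁻¹' Iio c) (fun r => (hf r).isOpen_preimage c)
    (fun x _ => by
      obtain ⟨r, hr, hx⟩ := hc x
      exact mem_iUnion.2 ⟨⟨r, hr⟩, hx⟩)
    (fun r r' => ⟨⟨min r r', mem_Ioi.2 (lt_min r.2 r'.2)⟩,
      fun x hx => (hmono (min_le_left _ _) x).trans_lt hx,
      fun x hx => (hmono (min_le_right _ _) x).trans_lt hx⟩)
  exact ⟨r, hr, fun x => hcover (mem_univ x)⟩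

theorem small_neighborhood_of_null_visits_general {G N : Type*}
    [MetricSpace G] [CompactSpace G] [Group G]
    [MeasurableSpace G] [BorelSpace G]
    [MetricSpace N] [CompactSpace N] [MulAction G N]
    (hcont : Continuous fun p : G × N => p.1 • p.2)
    (lam : Measure G) [IsProbabilityMeasure lam]
    (Δ : Set N) (hΔ : IsClosed Δ)
    (hnull : ∀ y : N, lam {α : G | α • y ∈ Δ} = 0) :
    ∀ ε : ℝ, 0 < ε → ∃ W : Set N, IsOpen W ∧ Δ ⊆ W ∧
      ∀ y : N, lam {α : G | α • y ∈ W} < ENNReal.ofReal ε := by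
  intro ε hε
  let f : ℝ → N → ℝ≥0∞ := fun r y => lam {α | α • y ∈ cthickening r Δ}
  have hf : ∀ r, UpperSemicontinuous (f r) := fun r =>
    (isClosed_cthickening.preimage hcont).upperSemicontinuous_measure_section lam
  have hmono : Monotone f := fun r r' hr y =>
    measure_mono fun α hα => cthickening_mono hr Δ hα
  have hsmall : ∀ y, ∃ r > 0, f r y < ENNReal.ofReal ε := fun y => by
    have hlim : Tendsto (f · y) (𝓝[>] 0) (𝓝 (lam {α | α • y ∈ Δ})) :=
      tendsto_measure_preimage_cthickening lam (h := (· • y))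
        (hcont.comp (continuous_id.prodMk continuous_const)) hΔ
    rw [hnull y] at hlim
    exact (eventually_mem_nhdsWithin.and
      (hlim.eventually (gt_mem_nhds (ENNReal.ofReal_pos.2 hε)))).exists
  obtain ⟨r, hr, hW⟩ := CompactSpace.exists_pos_forall_lt_of_upperSemicontinuous hf hmono hsmall
  exact ⟨thickening r Δ, isOpen_thickening, self_subset_thickening hr Δ, fun y =>
    lt_of_le_of_lt (measure_mono (preimage_mono (thickening_subset_cthickening r Δ))) (hW y)⟩

/-- If a compact metric group `G` acts continuously on a compact metric space `N`, `Δ ⊆ N`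
is closed, and a Borel probability measure `λ` on `G` gives measure zero to the visit set
`{α : α·y ∈ Δ}` for every `y`, then for every `ε > 0` there is an open neighborhood `W` of
`Δ` whose visit sets all have `λ`-measure less than `ε`. -/
theorem small_neighborhood_of_null_visits {G N : Type*}
    [MetricSpace G] [CompactSpace G] [Group G] [IsTopologicalGroup G]
    [MeasurableSpace G] [BorelSpace G]
    [MetricSpace N] [CompactSpace N] [MulAction G N]
    (hcont : Continuous fun p : G × N => p.1 • p.2)
    (lam : Measure G) [IsProbabilityMeasure lam]
    (Δ : Set N) (hΔ : IsClosed Δ)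
    (hnull : ∀ y : N, lam {α : G | α • y ∈ Δ} = 0) :
    ∀ ε : ℝ, 0 < ε → ∃ W : Set N, IsOpen W ∧ Δ ⊆ W ∧
      ∀ y : N, lam {α : G | α • y ∈ W} < ENNReal.ofReal ε :=
  small_neighborhood_of_null_visits_general hcont lam Δ hΔ hnull
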